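/- arXiv:2512.01386 — 2 statements merged into one kernel-verified Lean document; each statement's English description precedes it below -/
import Mathlib

section
/- For θ ∈ [0, π/2] and fixed 0 ≤ ε < 1, the function h(θ) = (cos θ + ε)/√(1 + 2ε cos θ + ε²) − cos θ is 0 at θ = 0 and attains its maximum on [0, π/2] at θ = π/2, where h(π/2) = ε/√(1 + ε²). -/
/-!
Write `c = cos θ ∈ [0, 1]`. Since `ε c ≥ 0`, the denominator `√(1 + 2εc + ε²)` is at least
`√(1 + ε²) ≥ 1`, so `h(θ) ≤ (c + ε)/√(1 + ε²) - c ≤ ε/√(1 + ε²)`, which is the value at `c = 0`,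
i.e. at `θ = π/2`. At `c = 1` the square root is `1 + ε` and the drift vanishes.
-/

open Real

noncomputable def cosDrift (ε c : ℝ) : ℝ :=
  (c + ε) / √(1 + 2 * ε * c + ε ^ 2) - c

lemma cosDrift_zero (ε : ℝ) : cosDrift ε 0 = ε / √(1 + ε ^ 2) := by
  simp [cosDrift]

lemma cosDrift_one {ε : ℝ} (hε : -1 < ε) : cosDrift ε 1 = 0 := by
  have hpos : 0 < 1 + ε := by linarith
  rw [cosDrift, show 1 + 2 * ε * 1 + ε ^ 2 = (1 + ε) ^ 2 by ring, sqrt_sq hpos.le,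
    add_comm 1 ε, div_self (by linarith), sub_self]

lemma cosDrift_le_cosDrift_zero {ε c : ℝ} (hε : 0 ≤ ε) (hc : 0 ≤ c) :
    cosDrift ε c ≤ cosDrift ε 0 := by
  have hone_le : 1 ≤ √(1 + ε ^ 2) := one_le_sqrt.mpr (by nlinarith)
  have hsqrt_le : √(1 + ε ^ 2) ≤ √(1 + 2 * ε * c + ε ^ 2) :=
    sqrt_le_sqrt (by nlinarith)
  rw [cosDrift_zero]
  calc cosDrift ε c ≤ (c + ε) / √(1 + ε ^ 2) - c := by
        unfold cosDrift
        gcongr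
    _ = c / √(1 + ε ^ 2) - c + ε / √(1 + ε ^ 2) := by ring
    _ ≤ ε / √(1 + ε ^ 2) := by linarith [div_le_self hc hone_le]

theorem tangential_motion_worst_case_general
    (ε : ℝ) (hε0 : 0 ≤ ε) :
    let h : ℝ → ℝ := fun θ =>
      (Real.cos θ + ε) / Real.sqrt (1 + 2*ε*Real.cos θ + ε^2) - Real.cos θ
    h 0 = 0 ∧
    (∀ θ ∈ Set.Icc (0:ℝ) (Real.pi/2), h θ ≤ h (Real.pi/2)) ∧
    h (Real.pi/2) = ε / Real.sqrt (1 + ε^2) := by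
  intro h
  have h_eq : ∀ θ, h θ = cosDrift ε (cos θ) := fun _ => rfl
  simp only [h_eq, cos_zero, cos_pi_div_two]
  refine ⟨cosDrift_one (by linarith), fun θ ⟨_, hθ1⟩ => ?_, cosDrift_zero ε⟩
  exact cosDrift_le_cosDrift_zero hε0
    (cos_nonneg_of_mem_Icc ⟨by linarith [pi_pos], hθ1⟩)

theorem tangential_motion_worst_case
    (ε : ℝ) (hε0 : 0 ≤ ε) (hε1 : ε < 1) :
    let h : ℝ → ℝ := fun θ =>
      (Real.cos θ + ε) / Real.sqrt (1 + 2*ε*Real.cos θ + ε^2) - Real.cos θ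
    h 0 = 0 ∧
    (∀ θ ∈ Set.Icc (0:ℝ) (Real.pi/2), h θ ≤ h (Real.pi/2)) ∧
    h (Real.pi/2) = ε / Real.sqrt (1 + ε^2) :=
  tangential_motion_worst_case_general ε hε0
end

section
/- Let τ_c > 0, Γ₀, Γ₁ > 0, γ ∈ ℂ \ {0}, and let the 3×3 matrix I_F = [[2τ_c²Γ₁|γ|², jτ_cΓ₁γ*, −jτ_cΓ₁γ], [jτ_cΓ₁γ*, 0, Γ₀+Γ₁], [−jτ_cΓ₁γ, Γ₀+Γ₁, 0]]. Then the (1,1) entry of I_F⁻¹ equals (Γ₀⁻¹ + Γ₁⁻¹)/(2τ_c²|γ|²). -/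
/-!
Write `I_F = [[a, bᵀ], [b, D]]` with `D = [[0, d], [d, 0]]`. Block inversion gives
`(I_F⁻¹)₁₁ = (a - bᵀ D⁻¹ b)⁻¹ = (a - 2 b₁ b₂ / d)⁻¹`. Here `2 b₁ b₂ = 2 τ_c² Γ₁² |γ|² = Γ₁ a` and
`d = Γ₀ + Γ₁`, so the Schur complement is `a Γ₀ / (Γ₀ + Γ₁)` and its inverse is the claimed bound.
-/

open Matrix Complex

theorem Matrix.inv_apply_zero_zero_of_lower_block_antidiagonal {K : Type*} [Field K] {d : K}
    (a u v : K) (hd : d ≠ 0) : (!![a, u, v; u, 0, d; v, d, 0])⁻¹ 0 0 = (a - 2 * u * v / d)⁻¹ := by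
  have hdet : (!![a, u, v; u, 0, d; v, d, 0]).det = -(d * (a * d - 2 * u * v)) := by
    simp only [det_fin_three, of_apply, cons_val', cons_val_zero, cons_val_one, cons_val,
      cons_val_fin_one]
    ring
  have hadj : (!![a, u, v; u, 0, d; v, d, 0]).adjugate 0 0 = -d ^ 2 := by
    simp [adjugate_fin_three, sq]
  have hschur : a - 2 * u * v / d = (a * d - 2 * u * v) / d := by field_simp
  rw [inv_def, smul_apply, smul_eq_mul, hadj, hdet, Ring.inverse_eq_inv', hschur, inv_div,
    inv_neg, neg_mul_neg]
  field_simp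

theorem crlb_closed_form_general
    (τc Γ0 Γ1 : ℝ) (hΓ0 : 0 < Γ0) (hΓ1 : 0 < Γ1)
    (γ : ℂ) :
    let IF : Matrix (Fin 3) (Fin 3) ℂ :=
      Matrix.of ![![(2 * τc^2 * Γ1 * ‖γ‖ ^ 2 : ℂ),
                    Complex.I * τc * Γ1 * (starRingEnd ℂ) γ,
                    -Complex.I * τc * Γ1 * γ],
                  ![Complex.I * τc * Γ1 * (starRingEnd ℂ) γ, 0, ((Γ0 + Γ1 : ℝ) : ℂ)],
                  ![-Complex.I * τc * Γ1 * γ, ((Γ0 + Γ1 : ℝ) : ℂ), 0]]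
    IF⁻¹ 0 0 = ((Γ0⁻¹ + Γ1⁻¹) / (2 * τc^2 * ‖γ‖ ^ 2) : ℂ) := by
  intro IF
  have hΓ0' : (Γ0 : ℂ) ≠ 0 := ofReal_ne_zero.mpr hΓ0.ne'
  have hΓ1' : (Γ1 : ℂ) ≠ 0 := ofReal_ne_zero.mpr hΓ1.ne'
  have hd : ((Γ0 + Γ1 : ℝ) : ℂ) ≠ 0 := ofReal_ne_zero.mpr (by positivity)
  have hcross : 2 * (I * τc * Γ1 * (starRingEnd ℂ) γ) * (-I * τc * Γ1 * γ)
      = Γ1 * (2 * τc ^ 2 * Γ1 * ‖γ‖ ^ 2) := by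
    linear_combination (-2 * (τc : ℂ) ^ 2 * Γ1 ^ 2 * γ * (starRingEnd ℂ) γ) * I_sq
      + (2 * (τc : ℂ) ^ 2 * Γ1 ^ 2) * mul_conj' γ
  have hschur :
      2 * τc ^ 2 * Γ1 * ‖γ‖ ^ 2 - Γ1 * (2 * τc ^ 2 * Γ1 * ‖γ‖ ^ 2) / ((Γ0 + Γ1 : ℝ) : ℂ) =
        2 * τc ^ 2 * ‖γ‖ ^ 2 * (Γ0 * Γ1 / (Γ0 + Γ1)) := by
    push_cast at hd ⊢
    field_simp
    ring
  rw [inv_apply_zero_zero_of_lower_block_antidiagonal _ _ _ hd, hcross, hschur, ofReal_inv,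
    ofReal_inv, inv_add_inv hΓ0' hΓ1', mul_inv, inv_div]
  ring

theorem crlb_closed_form
    (τc Γ0 Γ1 : ℝ) (hτc : 0 < τc) (hΓ0 : 0 < Γ0) (hΓ1 : 0 < Γ1)
    (γ : ℂ) (hγ : γ ≠ 0) :
    let IF : Matrix (Fin 3) (Fin 3) ℂ :=
      Matrix.of ![![(2 * τc^2 * Γ1 * ‖γ‖ ^ 2 : ℂ),
                    Complex.I * τc * Γ1 * (starRingEnd ℂ) γ,
                    -Complex.I * τc * Γ1 * γ],
                  ![Complex.I * τc * Γ1 * (starRingEnd ℂ) γ, 0, ((Γ0 + Γ1 : ℝ) : ℂ)],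
                  ![-Complex.I * τc * Γ1 * γ, ((Γ0 + Γ1 : ℝ) : ℂ), 0]]
    IF⁻¹ 0 0 = ((Γ0⁻¹ + Γ1⁻¹) / (2 * τc^2 * ‖γ‖ ^ 2) : ℂ) :=
  crlb_closed_form_general τc Γ0 Γ1 hΓ0 hΓ1 γ
end
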